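/- arXiv:1807.11026 — 4 statements merged into one kernel-verified Lean document; each statement's English description precedes it below -/
import Mathlib

section
/- For every rational tangle word (a_1, …, a_n): (1) a_1 is an NSI syllable; (2) if n ≥ 2, then a_2 is an SI syllable if and only if a_1 is even; (3) if 1 ≤ i < n and a_i is an SI syllable, then a_{i+1} is an NSI syllable. -/
/-- The three connectivity states of a partially built rational tangle:
`H = {NW–NE, SW–SE}`, `V = {NW–SW, NE–SE}`, `X = {NW–SE, NE–SW}`. -/
inductive TState : Type
  | H
  | V
  | X
  deriving DecidableEq

/-- Effect of a bottom crossing (a twist of SW and SE) on the connectivity state. -/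
def bstep : TState → TState
  | .H => .H
  | .V => .X
  | .X => .V

/-- Effect of a right crossing (a twist of NE and SE) on the connectivity state. -/
def rstep : TState → TState
  | .V => .V
  | .H => .X
  | .X => .H

/-- `step true` is a bottom crossing, `step false` is a right crossing. -/
def step : Bool → TState → TState
  | true => bstep
  | false => rstep

/-- The twist direction of the (0-based) `i`-th syllable: bottom iff `i` is even
(1-based odd syllables are bottom twists). -/
def sylDir (i : ℕ) : Bool := decide (i % 2 = 0)

/-- The state in which a crossing of the (0-based) `i`-th syllable is a self-intersection:
`H` for bottom syllables, `V` for right syllables. -/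
def siState (i : ℕ) : TState := if i % 2 = 0 then TState.H else TState.V

/-- Process a list of syllables starting from state `s`; the Boolean `b` records
whether the next syllable is a bottom syllable. Each syllable `a` applies
`|a|` crossings of the appropriate direction. -/
def runWord : List ℤ → Bool → TState → TState
  | [], _, s => s
  | a :: t, b, s => runWord t (!b) ((step b)^[a.natAbs] s)

/-- The connectivity state at the start of the (0-based) `i`-th syllable of the word `w`
(a rational tangle word starts in state `V`). -/
def stateAt (w : List ℤ) (i : ℕ) : TState := runWord (w.take i) true TState.V

/-- The (0-based) `i`-th syllable of `w` is an SI syllable. -/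
def IsSISyl (w : List ℤ) (i : ℕ) : Prop := stateAt w i = siState i

instance (w : List ℤ) (i : ℕ) : Decidable (IsSISyl w i) :=
  inferInstanceAs (Decidable (_ = _))

/-!
Each syllable twists in a single direction, and the SI state of that direction is a fixed point
of the corresponding crossing. Hence an SI syllable ends in its own SI state, which is never the
SI state of the next syllable (the direction alternates), so the next syllable is NSI. The word
starts in `V`, which is not the bottom SI state `H`; bottom crossings swap `V` and `X`, so after
`a_1` of them the state is `V`, the right SI state, exactly when `a_1` is even.
-/

lemma runWord_append (l₁ l₂ : List ℤ) (b : Bool) (s : TState) :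
    runWord (l₁ ++ l₂) b s = runWord l₂ ((!·)^[l₁.length] b) (runWord l₁ b s) := by
  induction l₁ generalizing b s with
  | nil => rfl
  | cons a t ih => simp only [List.cons_append, runWord, ih, List.length_cons,
      Function.iterate_succ_apply]

lemma not_iterate_true_eq_sylDir (i : ℕ) : (!·)^[i] true = sylDir i := by
  induction i with
  | zero => rfl
  | succ i ih =>
    rw [Function.iterate_succ_apply', ih, sylDir, sylDir]
    rcases Nat.mod_two_eq_zero_or_one i with h | h <;> simp [h, Nat.succ_mod_two_eq_zero_iff]

lemma stateAt_zero (w : List ℤ) : stateAt w 0 = .V := rfl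

lemma stateAt_succ (w : List ℤ) {i : ℕ} (h : i < w.length) :
    stateAt w (i + 1) = (step (sylDir i))^[w[i].natAbs] (stateAt w i) := by
  rw [stateAt, List.take_succ_eq_append_getElem h, runWord_append, List.length_take_of_le h.le,
    not_iterate_true_eq_sylDir]
  rfl

lemma not_isSISyl_zero (w : List ℤ) : ¬ IsSISyl w 0 := by
  simp [IsSISyl, stateAt_zero, siState]

lemma step_sylDir_siState (i : ℕ) : step (sylDir i) (siState i) = siState i := by
  rcases Nat.mod_two_eq_zero_or_one i with h | h <;> simp [sylDir, siState, step, h, bstep, rstep]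

lemma siState_succ_ne (i : ℕ) : siState (i + 1) ≠ siState i := by
  rcases Nat.mod_two_eq_zero_or_one i with h | h <;>
    simp [siState, h, Nat.succ_mod_two_eq_zero_iff]

lemma bstep_iterate_V (k : ℕ) : bstep^[k] .V = if Even k then .V else .X := by
  induction k with
  | zero => rfl
  | succ k ih =>
    rw [Function.iterate_succ_apply', ih]
    by_cases hk : Even k <;> simp [hk, Nat.even_add_one, bstep]

lemma bstep_iterate_V_eq_V_iff (k : ℕ) : bstep^[k] .V = .V ↔ Even k := by
  rw [bstep_iterate_V]
  split_ifs with hk <;> simp [hk]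

lemma not_isSISyl_succ_of_isSISyl (w : List ℤ) {i : ℕ} (hi : i < w.length)
    (hSI : IsSISyl w i) : ¬ IsSISyl w (i + 1) := by
  rw [IsSISyl, stateAt_succ w hi, hSI, Function.iterate_fixed (step_sylDir_siState i)]
  exact (siState_succ_ne i).symm

lemma isSISyl_one_iff (w : List ℤ) (hw : 0 < w.length) :
    IsSISyl w 1 ↔ Even w[0] := by
  rw [IsSISyl, stateAt_succ w hw, stateAt_zero, ← Int.natAbs_even]
  exact bstep_iterate_V_eq_V_iff _

/-- Proposition, conditions (1)–(3): for every rational tangle word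
`(a_1, …, a_n)` (0-based indexing): the first syllable is an NSI syllable; if `n ≥ 2`
then the second syllable is an SI syllable iff the first syllable is even; and the
syllable following an SI syllable is an NSI syllable. -/
theorem prop_SI_first_conditions (w : List ℤ) :
    (0 < w.length → ¬ IsSISyl w 0) ∧
    (2 ≤ w.length → (IsSISyl w 1 ↔ Even (w.getD 0 0))) ∧
    (∀ i : ℕ, i + 1 < w.length → IsSISyl w i → ¬ IsSISyl w (i + 1)) := by
  refine ⟨fun _ => not_isSISyl_zero w, fun hw => ?_,
    fun i hi => not_isSISyl_succ_of_isSISyl w (by omega)⟩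
  rw [List.getD_eq_getElem _ _ (by omega)]
  exact isSISyl_one_iff w (by omega)
end

section
/- Let (a_1, …, a_n) be a nonempty finite sequence of integers such that a_i = 0 for every odd index i. Then (a_1, …, a_n) ≈ (0), the single-entry zero word. -/
/-- Tangle-word reduction: the smallest equivalence relation on nonempty finite
sequences of integers closed under the moves (0)–(5). -/
inductive TEq : List ℤ → List ℤ → Prop
  /-- (0) `(a_1,…,a_k,0) ≈ (a_1,…,a_k)` -/
  | move0 (l : List ℤ) (h : l ≠ []) : TEq (l ++ [0]) l
  /-- (1) `(a_1,…,a_i,0,a_{i+1},…,a_n) ≈ (a_1,…,a_{i-1},a_i+a_{i+1},a_{i+2},…,a_n)` -/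
  | move1 (l r : List ℤ) (a b : ℤ) : TEq (l ++ a :: 0 :: b :: r) (l ++ (a + b) :: r)
  /-- (2) `(a_1,…,a_i,0,0,a_{i+1},…,a_n) ≈ (a_1,…,a_i,a_{i+1},…,a_n)` -/
  | move2 (l r : List ℤ) (h : l ++ r ≠ []) : TEq (l ++ 0 :: 0 :: r) (l ++ r)
  /-- (3) `(0,a+1,a_2,…,a_n) ≈ (0,a,a_2,…,a_n)` -/
  | move3 (a : ℤ) (r : List ℤ) : TEq (0 :: (a + 1) :: r) (0 :: a :: r)
  /-- (4) `(1,a,a_2,…,a_n) ≈ (a+1,a_2,…,a_n)` -/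
  | move4 (a : ℤ) (r : List ℤ) : TEq (1 :: a :: r) ((a + 1) :: r)
  /-- (5) `(-1,a,a_2,…,a_n) ≈ (a-1,a_2,…,a_n)` -/
  | move5 (a : ℤ) (r : List ℤ) : TEq ((-1) :: a :: r) ((a - 1) :: r)
  | refl (l : List ℤ) : TEq l l
  | symm {l₁ l₂ : List ℤ} : TEq l₁ l₂ → TEq l₂ l₁
  | trans {l₁ l₂ l₃ : List ℤ} : TEq l₁ l₂ → TEq l₂ l₃ → TEq l₁ l₃

theorem TEq.clear_after_zero (a : ℤ) (r : List ℤ) : TEq (0 :: a :: r) (0 :: 0 :: r) := by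
  induction a using Int.induction_on with
  | zero => exact TEq.refl _
  | succ i ih => exact (TEq.move3 i r).trans ih
  | pred i ih =>
    have h3 := TEq.move3 (-(i : ℤ) - 1) r
    rw [sub_add_cancel] at h3
    exact h3.symm.trans ih

theorem TEq.zero_zero : TEq [0, 0] [0] :=
  TEq.move0 [0] (List.cons_ne_nil 0 [])

theorem TEq.zero_zero_cons {r : List ℤ} (hr : r ≠ []) : TEq (0 :: 0 :: r) r :=
  TEq.move2 [] r hr

-- The paper's 1-based odd positions are the 0-based even indices `i` below.
/-- a nonempty finite sequence of integers whose entries at every odd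
(1-based) position vanish reduces to the single-entry zero word `(0)`.
(1-based odd positions are 0-based even positions.) -/
theorem odd_positions_zero_reduces (w : List ℤ) (hne : w ≠ [])
    (h : ∀ i : ℕ, i < w.length → i % 2 = 0 → w.getD i 0 = 0) :
    TEq w [0] := by
  match w, hne, h with
  | [], hne, _ => exact absurd rfl hne
  | [a], _, h =>
    obtain rfl : a = 0 := h 0 (by simp) rfl
    exact TEq.refl _
  | a :: b :: r, _, h =>
    obtain rfl : a = 0 := h 0 (by simp) rfl
    refine (TEq.clear_after_zero b r).trans ?_
    obtain rfl | hr := eq_or_ne r []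
    · exact TEq.zero_zero
    · refine (TEq.zero_zero_cons hr).trans (odd_positions_zero_reduces r hr fun i hi hi2 => ?_)
      simpa using h (i + 2) (by simp; omega) (by omega)
end

section
/- Let (n_1, …, n_k) ∈ ℕ^k with every n_i even, and suppose n_m > 0 for some fixed odd index m. In the resolution game on (n_1, …, n_k), the second player can force the resulting word to satisfy s_i = 0 for all i ≠ m and s_m ∈ {2, −2}. -/
/-!
The second player pairs the crossings of every syllable as `(i, 2k) ↔ (i, 2k + 1)` and answers
each move on the partner of the crossing just played. Since the first player always opens a pair,
the partner is still free. The answer carries the opposite sign, so that the pair contributes `0`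
to its syllable, except on the pair `(m, 0), (m, 1)`, where it copies the sign and the pair
contributes `±2`.
-/

section SignGame

variable {C : Type*} [Fintype C]

/-- A play of the sign-assignment game is a list of moves, each assigning a sign to a
crossing; it is legal if no crossing is chosen twice and every sign is `+1` or `-1`. -/
def LegalPlay (p : List (C × ℤ)) : Prop :=
  (p.map Prod.fst).Nodup ∧ ∀ m ∈ p, m.2 = 1 ∨ m.2 = -1

/-- The play `p` follows the strategy `σ` of the player who moves at all positions whose
number of prior moves is congruent to `parity` mod 2 (`parity = 0`: first player;
`parity = 1`: second player). -/
def Follows (parity : ℕ) (σ : List (C × ℤ) → C × ℤ) (p : List (C × ℤ)) : Prop :=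
  ∀ (i : ℕ) (hi : i < p.length), i % 2 = parity → p.get ⟨i, hi⟩ = σ (p.take i)

/-- The strategy `σ` always produces a legal move (an unchosen crossing with sign `±1`)
at the positions where its player is to move. -/
def LegalStrat (parity : ℕ) (σ : List (C × ℤ) → C × ℤ) : Prop :=
  ∀ p : List (C × ℤ), LegalPlay p → p.length % 2 = parity → p.length < Fintype.card C →
    (σ p).1 ∉ p.map Prod.fst ∧ ((σ p).2 = 1 ∨ (σ p).2 = -1)

/-- The player moving at positions of parity `parity` can force the predicate `P` on
complete plays: they have a legal strategy such that every complete legal play following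
it satisfies `P`. -/
def CanForce (parity : ℕ) (P : List (C × ℤ) → Prop) : Prop :=
  ∃ σ : List (C × ℤ) → C × ℤ, LegalStrat parity σ ∧
    ∀ p : List (C × ℤ), LegalPlay p → p.length = Fintype.card C → Follows parity σ p → P p

end SignGame

/-- The crossings of the resolution game on syllable sizes `n = (n_1, …, n_k)`:
pairs `(i, j)` with `i` a syllable index and `j < n_i`. -/
abbrev Cr (n : List ℕ) : Type := Σ i : Fin n.length, Fin (n.get i)

/-- The resulting word `(s_1, …, s_k)` of a complete play of the resolution game:
`s_i` is the sum of the signs assigned to the crossings of the `i`-th syllable. -/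
def result (n : List ℕ) (p : List (Cr n × ℤ)) : List ℤ :=
  (List.finRange n.length).map fun i =>
    ((p.filter fun m => decide (m.1.1 = i)).map Prod.snd).sum

open Function Finset

theorem Function.Involutive.even_card {C : Type*} [Fintype C] {f : C → C} (hf : Involutive f)
    (hne : ∀ c, f c ≠ c) : Even (Fintype.card C) := by
  have hsum : ∑ _c : C, (1 : ZMod 2) = 0 :=
    sum_involution (fun c _ => f c) (fun _ _ => by decide) (fun c _ _ => hne c)
      (fun _ _ => mem_univ _) (fun c _ => hf c)
  rw [← ZMod.natCast_eq_zero_iff_even]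
  simpa using hsum

theorem Function.Involutive.apply_mem_pair_iff {ι : Type*} [DecidableEq ι] {g : ι → ι}
    (hg : Involutive g) (a c : ι) :
    g c ∈ ({a, g a} : Finset ι) ↔ c ∈ ({a, g a} : Finset ι) := by
  simp only [mem_insert, mem_singleton, hg.eq_iff, hg a]
  exact or_comm

theorem Finset.sum_eq_sum_filter_of_map_neg {ι G : Type*} [AddCommGroup G]
    [IsAddTorsionFree G] {T : Finset ι} {p : ι → Prop} [DecidablePred p] {g : ι → ι}
    {f : ι → G} (hg : Involutive g) (hT : ∀ a ∈ T, g a ∈ T) (hp : ∀ a, p (g a) ↔ p a)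
    (hf : ∀ a, ¬p a → f (g a) = -f a) :
    ∑ a ∈ T, f a = ∑ a ∈ T with p a, f a := by
  rw [← sum_filter_add_sum_filter_not T p, add_eq_left]
  refine sum_involution (fun a _ => g a) (fun a ha => ?_) (fun a ha hfa hga => ?_)
    (fun a ha => ?_) (fun a _ => hg a)
  · rw [hf a (mem_filter.1 ha).2, add_neg_cancel]
  · have hpa := (mem_filter.1 ha).2
    exact hfa (self_eq_neg.1 (by simpa [hga] using hf a hpa))
  · obtain ⟨haT, hpa⟩ := mem_filter.1 ha
    exact mem_filter.2 ⟨hT a haT, by rwa [hp]⟩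

theorem List.Nodup.mem_of_length_eq_card {C : Type*} [Fintype C] {l : List C} (hl : l.Nodup)
    (hlen : l.length = Fintype.card C) (c : C) : c ∈ l := by
  by_contra hc
  have := (List.nodup_cons.2 ⟨hc, hl⟩).length_le_card
  simp only [List.length_cons] at this
  omega

theorem List.exists_notMem_of_length_lt_card {C : Type*} [Fintype C] [DecidableEq C]
    {l : List C} (hlen : l.length < Fintype.card C) : ∃ c, c ∉ l := by
  obtain ⟨c, -, hc⟩ := exists_mem_notMem_of_card_lt_card (s := l.toFinset) (t := univ)
    ((List.toFinset_card_le l).trans_lt hlen)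
  exact ⟨c, by simpa using hc⟩

theorem LegalPlay.fst_getElem_notMem_take {C : Type*} [Fintype C] {p : List (C × ℤ)}
    (hp : LegalPlay p) (j : ℕ) (hj : j < p.length) : p[j].1 ∉ (p.take j).map Prod.fst := by
  have hdisj := List.disjoint_take_drop (m := j) (n := j) hp.1 le_rfl
  rw [List.map_take]
  refine fun hmem => hdisj hmem ?_
  rw [← List.map_drop, List.drop_eq_getElem_cons hj]
  exact List.mem_cons_self

section PairingStrategy

variable {C : Type*} [DecidableEq C]

def signOf (p : List (C × ℤ)) (c : C) : ℤ :=
  ((p.filter fun x => x.1 = c).map Prod.snd).sum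

theorem signOf_cons (x : C × ℤ) (p : List (C × ℤ)) (c : C) :
    signOf (x :: p) c = (if x.1 = c then x.2 else 0) + signOf p c := by
  by_cases hx : x.1 = c <;> simp [signOf, hx]

theorem sum_filter_map_snd_eq_sum_signOf [Fintype C] (q : C → Prop) [DecidablePred q]
    (p : List (C × ℤ)) :
    ((p.filter fun x => q x.1).map Prod.snd).sum = ∑ c with q c, signOf p c := by
  induction p with
  | nil => simp [signOf]
  | cons x p ih =>
    simp only [signOf_cons, sum_add_distrib, sum_ite_eq, mem_filter, mem_univ, true_and, ← ih]
    by_cases hx : q x.1 <;> simp [hx]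

theorem signOf_eq_zero_of_notMem {p : List (C × ℤ)} {c : C} (hc : c ∉ p.map Prod.fst) :
    signOf p c = 0 := by
  induction p with
  | nil => rfl
  | cons x p ih =>
    simp only [List.map_cons, List.mem_cons, not_or] at hc
    rw [signOf_cons, if_neg (Ne.symm hc.1), ih hc.2, add_zero]

theorem signOf_of_mem {p : List (C × ℤ)} (hp : (p.map Prod.fst).Nodup) {x : C × ℤ}
    (hx : x ∈ p) : signOf p x.1 = x.2 := by
  induction p with
  | nil => simp at hx
  | cons y p ih =>
    rw [List.map_cons, List.nodup_cons] at hp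
    rw [signOf_cons]
    rcases List.mem_cons.1 hx with rfl | hx
    · rw [if_pos rfl, signOf_eq_zero_of_notMem hp.1, add_zero]
    · have hne : y.1 ≠ x.1 := fun h => hp.1 (h ▸ List.mem_map_of_mem hx)
      rw [if_neg hne, ih hp.2 hx, zero_add]

theorem signOf_eq_one_or_neg_one [Fintype C] {p : List (C × ℤ)} (hp : LegalPlay p) {c : C}
    (hc : c ∈ p.map Prod.fst) : signOf p c = 1 ∨ signOf p c = -1 := by
  obtain ⟨x, hx, rfl⟩ := List.mem_map.1 hc
  rw [signOf_of_mem hp.1 hx]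
  exact hp.2 x hx

/-- The fallback moves are never made in a play that follows the strategy; they only keep it
legal in every position. -/
noncomputable def pairingStrategy [Nonempty C] (pt : C → C) (S : Finset C)
    (q : List (C × ℤ)) : C × ℤ :=
  match q.getLast? with
  | some (c, e) =>
    if pt c ∈ q.map Prod.fst then (Classical.epsilon (· ∉ q.map Prod.fst), 1)
    else (pt c, if c ∈ S then e else -e)
  | none => (Classical.arbitrary C, 1)

variable [Nonempty C] {pt : C → C} {S : Finset C}

theorem legalStrat_pairingStrategy [Fintype C] (pt : C → C) (S : Finset C) :
    LegalStrat 1 (pairingStrategy pt S) := by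
  intro p hp hodd hlen
  cases hlast : p.getLast? with
  | none => simp [List.getLast?_eq_none_iff.1 hlast] at hodd
  | some x =>
    obtain ⟨c, e⟩ := x
    have he : e = 1 ∨ e = -1 := hp.2 _ (List.mem_of_getLast? hlast)
    simp only [pairingStrategy, hlast]
    split_ifs with htaken hS
    · obtain ⟨c', hc'⟩ := List.exists_notMem_of_length_lt_card (l := p.map Prod.fst)
        (by rwa [List.length_map])
      exact ⟨Classical.epsilon_spec (p := (· ∉ p.map Prod.fst)) ⟨c', hc'⟩, Or.inl rfl⟩
    · exact ⟨htaken, he⟩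
    · exact ⟨htaken, by rcases he with rfl | rfl <;> simp⟩

theorem pairingStrategy_append_singleton (hpt : Involutive pt) (hfix : ∀ c, pt c ≠ c)
    {q : List (C × ℤ)} (hq : ∀ c ∈ q.map Prod.fst, pt c ∈ q.map Prod.fst) {x : C × ℤ}
    (hx : x.1 ∉ q.map Prod.fst) :
    pairingStrategy pt S (q ++ [x]) = (pt x.1, if x.1 ∈ S then x.2 else -x.2) := by
  obtain ⟨c, e⟩ := x
  have hfree : pt c ∉ (q ++ [(c, e)]).map Prod.fst := by
    simp only [List.map_append, List.map_cons, List.map_nil, List.mem_append,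
      List.mem_singleton, not_or]
    exact ⟨fun h => hx (hpt c ▸ hq _ h), hfix c⟩
  simp only [pairingStrategy, List.getLast?_concat, if_neg hfree]

variable [Fintype C]

theorem getElem_odd_of_follows_pairingStrategy (hpt : Involutive pt) (hfix : ∀ c, pt c ≠ c)
    {p : List (C × ℤ)} (hp : LegalPlay p) (hf : Follows 1 (pairingStrategy pt S) p) {t : ℕ}
    (ht : 2 * t + 1 < p.length)
    (hclosed : ∀ c ∈ (p.take (2 * t)).map Prod.fst, pt c ∈ (p.take (2 * t)).map Prod.fst) :
    p[2 * t + 1] = (pt p[2 * t].1, if p[2 * t].1 ∈ S then p[2 * t].2 else -p[2 * t].2) := by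
  have h2t : 2 * t < p.length := by omega
  have hmove := hf (2 * t + 1) ht (by omega)
  rwa [List.get_eq_getElem, ← List.take_concat_get' p (2 * t) h2t,
    pairingStrategy_append_singleton hpt hfix hclosed (hp.fst_getElem_notMem_take _ h2t)]
    at hmove

theorem closed_take_of_follows_pairingStrategy (hpt : Involutive pt) (hfix : ∀ c, pt c ≠ c)
    {p : List (C × ℤ)} (hp : LegalPlay p) (hf : Follows 1 (pairingStrategy pt S) p) :
    ∀ t, 2 * t ≤ p.length →
      ∀ c ∈ (p.take (2 * t)).map Prod.fst, pt c ∈ (p.take (2 * t)).map Prod.fst := by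
  intro t
  induction t with
  | zero => simp
  | succ t ih =>
    intro hle
    have h2t : 2 * t < p.length := by omega
    have h2t1 : 2 * t + 1 < p.length := by omega
    have hclosed := ih (by omega)
    have hans := getElem_odd_of_follows_pairingStrategy hpt hfix hp hf h2t1 hclosed
    have htake : p.take (2 * (t + 1)) = p.take (2 * t) ++ [p[2 * t], p[2 * t + 1]] := by
      rw [show 2 * (t + 1) = 2 * t + 1 + 1 by ring, ← List.take_concat_get' p _ h2t1,
        ← List.take_concat_get' p _ h2t, List.append_assoc, List.singleton_append]
    simp only [htake, List.map_append, List.map_cons, List.map_nil, List.mem_append,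
      List.mem_cons, List.not_mem_nil, or_false, hans]
    rintro c (hc | rfl | rfl)
    · exact Or.inl (hclosed c hc)
    · exact Or.inr (Or.inr rfl)
    · exact Or.inr (Or.inl (hpt _))

theorem signOf_apply_of_follows_pairingStrategy (hpt : Involutive pt) (hfix : ∀ c, pt c ≠ c)
    (hS : ∀ c, pt c ∈ S ↔ c ∈ S) {p : List (C × ℤ)} (hp : LegalPlay p)
    (hlen : p.length = Fintype.card C) (hf : Follows 1 (pairingStrategy pt S) p) (c : C) :
    signOf p (pt c) = if c ∈ S then signOf p c else -signOf p c := by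
  have hans : ∀ t (ht : 2 * t + 1 < p.length),
      p[2 * t + 1] = (pt p[2 * t].1, if p[2 * t].1 ∈ S then p[2 * t].2 else -p[2 * t].2) :=
    fun t ht => getElem_odd_of_follows_pairingStrategy hpt hfix hp hf ht
      (closed_take_of_follows_pairingStrategy hpt hfix hp hf t (by omega))
  have hsign : ∀ t (ht : 2 * t + 1 < p.length), signOf p p[2 * t + 1].1 =
      if p[2 * t].1 ∈ S then signOf p p[2 * t].1 else -signOf p p[2 * t].1 := fun t ht => by
    rw [signOf_of_mem hp.1 (List.getElem_mem ht), signOf_of_mem hp.1 (List.getElem_mem _), hans]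
  -- A complete play has even length, so every move at an even index is answered.
  obtain ⟨T, hT⟩ := hpt.even_card hfix
  obtain ⟨j, hj, rfl⟩ := List.mem_iff_getElem.1 ((hp.1.mem_of_length_eq_card (by simpa) c))
  rw [List.length_map] at hj
  obtain ⟨t, rfl | rfl⟩ := Nat.even_or_odd' j
  all_goals
    have ht : 2 * t + 1 < p.length := by omega
    have hpair : p[2 * t + 1].1 = pt p[2 * t].1 := by rw [hans t ht]
    simp only [List.getElem_map]
  · rw [← hpair, hsign t ht]
  · rw [hpair, hpt]
    simp only [hS]
    rw [← hpair, hsign t ht]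
    split_ifs <;> simp

end PairingStrategy

def partnerIndex (j : ℕ) : ℕ := if j % 2 = 0 then j + 1 else j - 1

theorem partnerIndex_lt {j e : ℕ} (hj : j < e) (he : Even e) : partnerIndex j < e := by
  obtain ⟨k, rfl⟩ := he
  unfold partnerIndex
  split <;> omega

theorem partnerIndex_partnerIndex (j : ℕ) : partnerIndex (partnerIndex j) = j := by
  unfold partnerIndex
  split <;> split <;> omega

theorem partnerIndex_ne (j : ℕ) : partnerIndex j ≠ j := by
  unfold partnerIndex
  split <;> omega

def partner {n : List ℕ} (h : ∀ x ∈ n, Even x) (c : Cr n) : Cr n :=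
  ⟨c.1, ⟨partnerIndex c.2, partnerIndex_lt c.2.2 (h _ (List.get_mem _ _))⟩⟩

section Partner

variable {n : List ℕ} (h : ∀ x ∈ n, Even x)

theorem partner_fst (c : Cr n) : (partner h c).1 = c.1 := rfl

theorem partner_involutive : Involutive (partner h) := fun c =>
  Sigma.ext rfl (heq_of_eq (Fin.ext (partnerIndex_partnerIndex c.2)))

theorem partner_ne (c : Cr n) : partner h c ≠ c := fun hc =>
  partnerIndex_ne c.2 (congrArg (fun c : Cr n => (c.2 : ℕ)) hc)

end Partner

theorem result_getD_eq_sum_signOf (n : List ℕ) (p : List (Cr n × ℤ)) (i : Fin n.length) :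
    (result n p).getD i 0 = ∑ c : Cr n with c.1 = i, signOf p c := by
  rw [List.getD_eq_getElem _ _ (by simp [result]), ← sum_filter_map_snd_eq_sum_signOf]
  simp [result]

theorem second_forces_pm_two_at_m_general (n : List ℕ) (h : ∀ x ∈ n, Even x)
    (m : Fin n.length) (hpos : 0 < n.get m) :
    CanForce (C := Cr n) 1 (fun p =>
      (∀ i : Fin n.length, i ≠ m → (result n p).getD (i : ℕ) 0 = 0) ∧
      ((result n p).getD (m : ℕ) 0 = 2 ∨ (result n p).getD (m : ℕ) 0 = -2)) := by
  set a : Cr n := ⟨m, ⟨0, hpos⟩⟩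
  have : Nonempty (Cr n) := ⟨a⟩
  set S : Finset (Cr n) := {a, partner h a} with hS_def
  have hS : ∀ c, partner h c ∈ S ↔ c ∈ S := (partner_involutive h).apply_mem_pair_iff a
  have hSm : ∀ c ∈ S, c.1 = m := by simp [hS_def, partner_fst, a]
  refine ⟨pairingStrategy (partner h) S, legalStrat_pairingStrategy _ _, fun p hp hlen hf => ?_⟩
  have hsign := signOf_apply_of_follows_pairingStrategy (partner_involutive h) (partner_ne h) hS
    hp hlen hf
  have hsyllable (i : Fin n.length) :
      (result n p).getD i 0 = ∑ c : Cr n with c.1 = i ∧ c ∈ S, signOf p c := by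
    rw [result_getD_eq_sum_signOf, sum_eq_sum_filter_of_map_neg (partner_involutive h)
      (fun c hc => by simpa [partner_fst] using hc) hS (fun c hc => by rw [hsign, if_neg hc]),
      filter_filter]
  refine ⟨fun i hi => ?_, ?_⟩
  · rw [hsyllable]
    refine sum_eq_zero fun c hc => absurd ?_ hi
    obtain ⟨hci, hcS⟩ := (mem_filter.1 hc).2
    exact hci ▸ hSm c hcS
  · have hfilter : ({c : Cr n | c.1 = m ∧ c ∈ S} : Finset (Cr n)) = S := by
      ext c
      simp only [mem_filter, mem_univ, true_and, and_iff_right_iff_imp]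
      exact hSm c
    rw [hsyllable, hfilter, sum_pair (partner_ne h a).symm, hsign, if_pos (mem_insert_self _ _)]
    have ha := hp.1.mem_of_length_eq_card (by rw [List.length_map, hlen]) a
    rcases signOf_eq_one_or_neg_one hp ha with ha | ha <;> simp [ha]

/-- in the resolution game on `(n_1, …, n_k)` with every `n_i` even and
`n_m > 0` for a fixed odd (1-based) index `m` (0-based: `m % 2 = 0`), the second player
can force `s_i = 0` for all `i ≠ m` and `s_m ∈ {2, -2}`. -/
theorem second_forces_pm_two_at_m (n : List ℕ) (h : ∀ x ∈ n, Even x)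
    (m : Fin n.length) (hmodd : (m : ℕ) % 2 = 0) (hpos : 0 < n.get m) :
    CanForce (C := Cr n) 1 (fun p =>
      (∀ i : Fin n.length, i ≠ m → (result n p).getD (i : ℕ) 0 = 0) ∧
      ((result n p).getD (m : ℕ) 0 = 2 ∨ (result n p).getD (m : ℕ) 0 = -2)) :=
  second_forces_pm_two_at_m_general n h m hpos
end

section
/- For all ε, δ ∈ {1, −1} and every m ≥ 0, the word (ε, 0, …, 0, δ) with exactly m zeros between ε and δ satisfies (ε, 0, …, 0, δ) ≈ (ε + δ); and for every c ∈ ℤ and all r, s ≥ 0, the word consisting of 2r zeros, then c, then s zeros satisfies (0, …, 0, c, 0, …, 0) ≈ (c). -/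
namespace TEq

instance : Trans TEq TEq TEq := ⟨TEq.trans⟩

theorem append_replicate_zero {l : List ℤ} (hl : l ≠ []) (s : ℕ) :
    TEq (l ++ List.replicate s 0) l := by
  induction s with
  | zero => simpa using refl l
  | succ s ih =>
    rw [List.replicate_succ', ← List.append_assoc]
    exact (move0 _ (by simp [hl])).trans ih

theorem append_replicate_two_mul_zero_append {l w : List ℤ} (h : l ++ w ≠ []) (k : ℕ) :
    TEq (l ++ (List.replicate (2 * k) 0 ++ w)) (l ++ w) := by
  induction k with
  | zero => simpa using refl _
  | succ k ih =>
    have hsplit : List.replicate (2 * (k + 1)) (0 : ℤ) ++ w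
        = 0 :: 0 :: (List.replicate (2 * k) 0 ++ w) := by
      rw [show 2 * (k + 1) = 2 + 2 * k by ring, List.replicate_add]
      rfl
    rw [hsplit]
    exact (move2 _ _ (by simp_all)).trans ih

theorem cons_cons_of_sign {ε : ℤ} (hε : ε = 1 ∨ ε = -1) (a : ℤ) (r : List ℤ) :
    TEq (ε :: a :: r) ((ε + a) :: r) := by
  rcases hε with rfl | rfl
  · simpa [add_comm] using move4 a r
  · simpa [neg_add_eq_sub] using move5 a r

end TEq

/-- for signs `ε, δ ∈ {1, -1}` and any number `m ≥ 0` of intermediate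
zeros, `(ε, 0, …, 0, δ) ≈ (ε + δ)`; and for any `c ∈ ℤ`, `r, s ≥ 0`, the word of `2r`
zeros, then `c`, then `s` zeros reduces to `(c)`. -/
theorem reduction_lemmas :
    (∀ ε δ : ℤ, (ε = 1 ∨ ε = -1) → (δ = 1 ∨ δ = -1) → ∀ m : ℕ,
      TEq (ε :: (List.replicate m 0 ++ [δ])) [ε + δ]) ∧
    (∀ c : ℤ, ∀ r s : ℕ,
      TEq (List.replicate (2 * r) 0 ++ c :: List.replicate s 0) [c]) := by
  refine ⟨fun ε δ hε _ m => ?_, fun c r s => ?_⟩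
  · obtain ⟨k, rfl | rfl⟩ := Nat.even_or_odd' m
    · calc TEq (ε :: (List.replicate (2 * k) 0 ++ [δ])) [ε, δ] :=
            TEq.append_replicate_two_mul_zero_append (l := [ε]) (by simp) k
        TEq _ [ε + δ] := TEq.cons_cons_of_sign hε δ []
    · rw [List.replicate_succ', List.append_assoc]
      calc TEq (ε :: (List.replicate (2 * k) 0 ++ [0, δ])) [ε, 0, δ] :=
            TEq.append_replicate_two_mul_zero_append (l := [ε]) (by simp) k
        TEq _ [ε + δ] := TEq.move1 [] [] ε δ
  · calc TEq (List.replicate (2 * r) 0 ++ c :: List.replicate s 0) ([c] ++ List.replicate s 0) :=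
          TEq.append_replicate_two_mul_zero_append (l := []) (by simp) r
      TEq _ [c] := TEq.append_replicate_zero (by simp) s
end
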